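/- For x of order 4 in G = A(n,θ), the quotient G/[x,G] is isomorphic to a central product of the cyclic group ⟨x⟩ of order 4 with an extraspecial 2-group E of order 2^n, amalgamating ⟨x²⟩ with Z(E). -/

import Mathlib

noncomputable section

abbrev Fq (n : ℕ) : Type := GaloisField 2 n

instance (n : ℕ) : Fintype (Fq n) := Fintype.ofFinite _

@[ext] structure SuzukiA (n : ℕ) (θ : Fq n ≃+* Fq n) where
  a : Fq n
  b : Fq n

namespace SuzukiA

variable {n : ℕ} {θ : Fq n ≃+* Fq n}

instance : Mul (SuzukiA n θ) := ⟨fun x y => ⟨x.a + y.a, x.b + y.b + x.a * θ y.a⟩⟩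
instance : One (SuzukiA n θ) := ⟨⟨0, 0⟩⟩
instance : Inv (SuzukiA n θ) := ⟨fun x => ⟨x.a, x.b + x.a * θ x.a⟩⟩

theorem mul_def (x y : SuzukiA n θ) :
    x * y = ⟨x.a + y.a, x.b + y.b + x.a * θ y.a⟩ := rfl

@[simp] theorem one_a : (1 : SuzukiA n θ).a = 0 := rfl
@[simp] theorem one_b : (1 : SuzukiA n θ).b = 0 := rfl

instance : Group (SuzukiA n θ) where
  mul_assoc x y z := by ext <;> simp [mul_def, map_add] <;> ring
  one_mul x := by ext <;> simp [mul_def]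
  mul_one x := by ext <;> simp [mul_def]
  inv_mul_cancel x := by
    have h2 : (2 : Fq n) = 0 := by
      have := CharP.cast_eq_zero (Fq n) 2
      exact_mod_cast this
    show (⟨x.a, x.b + x.a * θ x.a⟩ * x : SuzukiA n θ) = 1
    ext
    · show x.a + x.a = 0
      linear_combination x.a * h2
    · show x.b + x.a * θ x.a + x.b + x.a * θ x.a = 0
      linear_combination (x.b + x.a * θ x.a) * h2

instance : Fintype (SuzukiA n θ) :=
  Fintype.ofEquiv (Fq n × Fq n)
    { toFun := fun p => ⟨p.1, p.2⟩
      invFun := fun x => (x.a, x.b)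
      left_inv := fun _ => rfl
      right_inv := fun _ => rfl }

end SuzukiA

/-- An extraspecial `2`-group: the center has order `2`, coincides with the
commutator subgroup, and the central quotient is elementary abelian
(equivalently, all squares are central). -/
def IsExtraspecial2 (E : Type*) [Group E] : Prop :=
  Nat.card (Subgroup.center E) = 2 ∧ commutator E = Subgroup.center E ∧
    ∀ g : E, g ^ 2 ∈ Subgroup.center E

/-!
Write `α = x.a` and `Tr : 𝔽_{2^n} → 𝔽₂` for the trace. Commutators and squares lie in the centre
`{(0, b)}`, with `⁅g, h⁆ = (0, g.a θ(h.a) + h.a θ(g.a))`. The image of `θ + 1` is `ker Tr` (its kernel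
is the fixed field `𝔽₂`), so `[x, G] = {(0, b) | Tr (b / (α θ(α))) = 0}`, and two classes of
`G / [x, G]` commute iff `β(g.a / α, h.a / α) = 0`, where `β(u, v) = Tr (u θ(v) + v θ(u))`. Hence `x`
becomes central, while `x²` survives because `Tr 1 = n = 1`.

`E` is the image of `{g | Tr (g.a / α) = 0}`, a subgroup of index `2` not containing `x`. On `ker Tr`
the form `β` is nondegenerate: `β(u, v) = Tr (v (θ⁻¹(u) + θ(u)))`, and `θ⁻¹(u) = θ(u)` makes `u` fixed
by `θ²`, which for odd `n` again generates the Galois group, so `u ∈ 𝔽₂ ∩ ker Tr = 0`. Therefore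
`Z(E) = E' = ⟨x²⟩`.
-/

open scoped commutatorElement

local notation "Tr" => Algebra.trace (ZMod 2) (Fq _)

lemma ZMod.eq_zero_or_eq_one_two (a : ZMod 2) : a = 0 ∨ a = 1 := by
  revert a
  decide

lemma AddMonoidHom.card_ker_mul_card_range {A B : Type*} [AddGroup A] [AddGroup B]
    (f : A →+ B) : Nat.card f.ker * Nat.card f.range = Nat.card A := by
  rw [← AddSubgroup.index_ker, AddSubgroup.card_mul_index]

lemma Subgroup.mem_center_of_coe_mem_center {G : Type*} [Group G] {H : Subgroup G} {h : H}
    (hh : (h : G) ∈ Subgroup.center G) : h ∈ Subgroup.center H :=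
  Subgroup.mem_center_iff.mpr fun g => Subtype.ext (Subgroup.mem_center_iff.mp hh g)

lemma QuotientGroup.mk_mem_center {G : Type*} [Group G] {N : Subgroup G} [N.Normal] {g : G}
    (hg : g ∈ Subgroup.center G) : (g : G ⧸ N) ∈ Subgroup.center (G ⧸ N) := by
  refine Subgroup.mem_center_iff.mpr fun y => ?_
  obtain ⟨h, rfl⟩ := QuotientGroup.mk_surjective y
  rw [← QuotientGroup.mk_mul, ← QuotientGroup.mk_mul, Subgroup.mem_center_iff.mp hg h]

lemma Subgroup.coe_commutatorElement {G : Type*} [Group G] {H : Subgroup G} (q r : H) :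
    ((⁅q, r⁆ : H) : G) = ⁅(q : G), (r : G)⁆ :=
  map_commutatorElement H.subtype q r

lemma QuotientGroup.mk_commutatorElement {G : Type*} [Group G] {N : Subgroup G} [N.Normal]
    (g h : G) : ((⁅g, h⁆ : G) : G ⧸ N) = ⁅(g : G ⧸ N), (h : G ⧸ N)⁆ :=
  map_commutatorElement (QuotientGroup.mk' N) g h

namespace Subgroup

variable {G : Type*} [Group G] {H : Subgroup G} {p : G}

lemma zpowers_inf_eq_zpowers_sq (hp : p ∉ H) (hp2 : p ^ 2 ∈ H) :
    zpowers p ⊓ H = zpowers (p ^ 2) := by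
  refine le_antisymm ?_ (le_inf (zpowers_le.mpr (pow_mem (mem_zpowers p) 2)) (zpowers_le.mpr hp2))
  rintro _ ⟨hy, hyH⟩
  obtain ⟨k, rfl⟩ := mem_zpowers_iff.mp hy
  obtain ⟨j, rfl | rfl⟩ := Int.even_or_odd' k
  · exact ⟨j, by group⟩
  · refine absurd ?_ hp
    rw [show p = p ^ (2 * j + 1) * ((p ^ 2) ^ j)⁻¹ by group]
    exact H.mul_mem hyH (H.inv_mem (H.zpow_mem hp2 j))

lemma zpowers_sup_eq_top_of_index_eq_two (hH : H.index = 2) (hp : p ∉ H) :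
    zpowers p ⊔ H = ⊤ := by
  refine eq_top_iff.mpr fun y _ => ?_
  by_cases hy : y ∈ H
  · exact mem_sup_right hy
  · have : p⁻¹ * y ∈ H :=
      (mul_mem_iff_of_index_two hH).mpr (iff_of_false (by rwa [inv_mem_iff]) hy)
    rw [← mul_inv_cancel_left p y]
    exact mul_mem (mem_sup_left (mem_zpowers p)) (mem_sup_right this)

end Subgroup

namespace Fq

variable {n m : ℕ}

lemma pow_two_pow_eq_self (hn : n ≠ 0) (c : Fq n) : c ^ 2 ^ n = c := by
  rw [← GaloisField.card 2 n hn, Nat.card_eq_fintype_card, FiniteField.pow_card]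

lemma sq_eq_self_of_pow_four_eq_self (hm : n = 2 * m + 1) {c : Fq n} (h : c ^ 4 = c) :
    c ^ 2 = c := by
  have h4 : ∀ j, c ^ 4 ^ j = c := by
    intro j
    induction j with
    | zero => simp
    | succ j ih => rw [pow_succ, pow_mul, ih, h]
  calc c ^ 2 = (c ^ 2 ^ n) ^ 2 := by rw [pow_two_pow_eq_self (by omega)]
    _ = c ^ 4 ^ (m + 1) := by
      rw [← pow_mul, show 2 ^ n * 2 = 4 ^ (m + 1) by
        rw [← pow_succ, show 4 = 2 ^ 2 by norm_num, ← pow_mul, hm]; ring_nf]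
    _ = c := h4 _

lemma trace_ringEquiv_apply (σ : Fq n ≃+* Fq n) (c : Fq n) : Tr (σ c) = Tr c :=
  Algebra.trace_eq_of_algEquiv (AlgEquiv.ofRingEquiv (f := σ) fun r =>
    congrArg (· r) (RingHom.ext_zmod (σ.toRingHom.comp (algebraMap _ _)) (algebraMap _ _))) c

lemma trace_one (hm : n = 2 * m + 1) : Tr (1 : Fq n) = 1 := by
  rw [← map_one (algebraMap (ZMod 2) (Fq n)), Algebra.trace_algebraMap,
    GaloisField.finrank 2 (by omega : n ≠ 0), hm]
  simp [show (2 : ZMod 2) = 0 from rfl]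

variable {θ : Fq n ≃+* Fq n}

lemma eq_zero_or_eq_one_of_apply_apply (hm : n = 2 * m + 1)
    (hθ : ∀ σ : Fq n ≃+* Fq n, σ ∈ Subgroup.zpowers θ) {c : Fq n} (h : θ (θ c) = c) :
    c = 0 ∨ c = 1 := by
  -- Frobenius is a power of `θ`, so its square fixes `c`: `c ∈ 𝔽₄ ∩ 𝔽_{2^n} = 𝔽₂`.
  obtain ⟨k, hk⟩ := Subgroup.mem_zpowers_iff.mp (hθ (frobeniusEquiv (Fq n) 2))
  have hθ2 : θ ^ 2 ∈ MulAction.stabilizer (Fq n ≃+* Fq n) c := h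
  have hfrob2 := zpow_mem hθ2 k
  rw [← zpow_natCast, ← zpow_mul, mul_comm, zpow_mul, hk] at hfrob2
  have h4 : c ^ 4 = c := by
    simpa [MulAction.mem_stabilizer_iff, RingAut.smul_def, frobenius_def, ← pow_mul]
      using hfrob2
  have h2 : c * c = c := by rw [← sq]; exact sq_eq_self_of_pow_four_eq_self hm h4
  exact IsIdempotentElem.iff_eq_zero_or_one.mp h2

lemma exists_trace_mul_eq_one {c : Fq n} (hc : c ≠ 0) : ∃ v, Tr (v * c) = 1 := by
  by_contra! h
  refine hc ((traceForm_nondegenerate (ZMod 2) (Fq n)).1 c fun v => ?_)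
  rw [Algebra.traceForm_apply, mul_comm]
  exact (ZMod.eq_zero_or_eq_one_two _).resolve_right (h v)

variable (n) in
def traceKer : AddSubgroup (Fq n) := (Algebra.trace (ZMod 2) (Fq n)).toAddMonoidHom.ker

lemma mem_traceKer {c : Fq n} : c ∈ traceKer n ↔ Tr c = 0 := Iff.rfl

lemma card_traceKer_mul_two (hn : n ≠ 0) : Nat.card (traceKer n) * 2 = 2 ^ n := by
  have hsurj : (Algebra.trace (ZMod 2) (Fq n)).toAddMonoidHom.range = ⊤ := by
    refine AddMonoidHom.range_eq_top.mpr fun a => ?_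
    rcases ZMod.eq_zero_or_eq_one_two a with rfl | rfl
    · exact ⟨0, map_zero _⟩
    · obtain ⟨v, hv⟩ := exists_trace_mul_eq_one (one_ne_zero : (1 : Fq n) ≠ 0)
      exact ⟨v, by simpa using hv⟩
  have := AddMonoidHom.card_ker_mul_card_range (Algebra.trace (ZMod 2) (Fq n)).toAddMonoidHom
  rwa [hsurj, AddSubgroup.card_top, Nat.card_zmod, GaloisField.card 2 n hn] at this

lemma trace_eq_zero_iff (hm : n = 2 * m + 1)
    (hθ : ∀ σ : Fq n ≃+* Fq n, σ ∈ Subgroup.zpowers θ) {c : Fq n} :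
    Tr c = 0 ↔ ∃ s, θ s + s = c := by
  -- `θ + 1` has kernel `𝔽₂`, so its image has the size of `ker Tr`, which contains it.
  let L : Fq n →+ Fq n := AddMonoidHom.mk' (fun s => θ s + s) fun s t => by rw [map_add]; abel
  have hL : ∀ s, L s = θ s + s := fun _ => rfl
  have hle : L.range ≤ traceKer n := by
    rintro _ ⟨s, rfl⟩
    rw [mem_traceKer, hL, map_add, trace_ringEquiv_apply, CharTwo.add_self_eq_zero]
  have hker : (L.ker : Set (Fq n)) = {0, 1} := by
    ext s
    rw [SetLike.mem_coe, AddMonoidHom.mem_ker, hL, CharTwo.add_eq_zero]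
    refine ⟨fun h => eq_zero_or_eq_one_of_apply_apply hm hθ (by rw [h, h]), ?_⟩
    rintro (rfl | rfl) <;> simp
  have hcard := AddMonoidHom.card_ker_mul_card_range L
  rw [← SetLike.coe_sort_coe, hker, Nat.card_coe_set_eq, Set.ncard_pair zero_ne_one,
    GaloisField.card 2 n (by omega), ← card_traceKer_mul_two (by omega), mul_comm] at hcard
  have heq : L.range = traceKer n :=
    AddSubgroup.eq_of_le_of_card_ge hle (Nat.eq_of_mul_eq_mul_right two_pos hcard).ge
  rw [← mem_traceKer, ← heq]
  exact AddMonoidHom.mem_range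

lemma exists_ne_zero_trace_eq_zero (hn : 1 < n) : ∃ u : Fq n, u ≠ 0 ∧ Tr u = 0 := by
  have hcard := card_traceKer_mul_two (n := n) (by omega)
  have : Nontrivial (traceKer n) := by
    rw [← Finite.one_lt_card_iff_nontrivial]
    have : 2 ^ 2 ≤ 2 ^ n := Nat.pow_le_pow_right two_pos hn
    omega
  obtain ⟨⟨u, hu⟩, hne⟩ := exists_ne (0 : traceKer n)
  exact ⟨u, fun h => hne (Subtype.ext h), hu⟩

lemma exists_trace_eq_zero_and_trace_eq_one (hm : n = 2 * m + 1)
    (hθ : ∀ σ : Fq n ≃+* Fq n, σ ∈ Subgroup.zpowers θ) {u : Fq n} (hu : u ≠ 0)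
    (hTu : Tr u = 0) : ∃ v, Tr v = 0 ∧ Tr (u * θ v + v * θ u) = 1 := by
  -- `Tr (u θ(v)) = Tr (θ⁻¹(u) v)`, so `β(u, ·) = Tr (· * c)`; as `Tr c = 0`, `v` may be shifted by `1`.
  set c := θ.symm u + θ u
  have hform : ∀ v, Tr (u * θ v + v * θ u) = Tr (v * c) := by
    intro v
    rw [map_add, ← trace_ringEquiv_apply θ.symm (u * θ v), mul_add, map_add]
    simp [mul_comm]
  have hc : c ≠ 0 := by
    intro h0
    have hθθ : θ (θ u) = u := by
      rw [← CharTwo.add_eq_zero.mp h0, RingEquiv.apply_symm_apply]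
    rcases eq_zero_or_eq_one_of_apply_apply hm hθ hθθ with rfl | rfl
    · exact hu rfl
    · exact one_ne_zero ((trace_one hm).symm.trans hTu)
  have hTc : Tr c = 0 := by
    rw [map_add, trace_ringEquiv_apply, trace_ringEquiv_apply, hTu, add_zero]
  obtain ⟨v, hv⟩ := exists_trace_mul_eq_one hc
  rcases ZMod.eq_zero_or_eq_one_two (Tr v) with h | h
  · exact ⟨v, h, by rw [hform, hv]⟩
  · refine ⟨v + 1, by rw [map_add, h, trace_one hm]; rfl, ?_⟩
    rw [hform, add_mul, one_mul, map_add, hv, hTc, add_zero]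

lemma mul_apply_add_mul_apply_div (θ : Fq n ≃+* Fq n) {α : Fq n} (hα : α ≠ 0) (c d : Fq n) :
    (c * θ d + d * θ c) / (α * θ α) = c / α * θ (d / α) + d / α * θ (c / α) := by
  have : θ α ≠ 0 := by simpa using hα
  simp only [map_div₀]
  field_simp

end Fq

namespace SuzukiA

variable {n m : ℕ} {θ : Fq n ≃+* Fq n}

@[simp] lemma mul_a (g h : SuzukiA n θ) : (g * h).a = g.a + h.a := rfl
@[simp] lemma mul_b (g h : SuzukiA n θ) : (g * h).b = g.b + h.b + g.a * θ h.a := rfl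
@[simp] lemma inv_a (g : SuzukiA n θ) : g⁻¹.a = g.a := rfl
@[simp] lemma inv_b (g : SuzukiA n θ) : g⁻¹.b = g.b + g.a * θ g.a := rfl

lemma commutatorElement_eq (g h : SuzukiA n θ) :
    ⁅g, h⁆ = ⟨0, g.a * θ h.a + h.a * θ g.a⟩ := by
  ext <;> simp only [commutatorElement_def, mul_a, mul_b, inv_a, inv_b]
  · linear_combination (g.a + h.a) * CharTwo.two_eq_zero (R := Fq n)
  · linear_combination (g.b + h.b + g.a * θ g.a + h.a * θ h.a + g.a * θ h.a) *
      CharTwo.two_eq_zero (R := Fq n)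

lemma sq_eq (g : SuzukiA n θ) : g ^ 2 = ⟨0, g.a * θ g.a⟩ := by
  ext <;> simp [sq, CharTwo.add_self_eq_zero]

lemma mem_center_of_a_eq_zero {g : SuzukiA n θ} (hg : g.a = 0) : g ∈ Subgroup.center _ :=
  Subgroup.mem_center_iff.mpr fun h => by ext <;> simp [hg, add_comm]

lemma pow_four_eq_one (g : SuzukiA n θ) : g ^ 4 = 1 := by
  rw [show 4 = 2 * 2 by rfl, pow_mul, sq_eq, sq_eq]
  ext <;> simp

lemma a_ne_zero_of_orderOf_eq_four {x : SuzukiA n θ} (hx : orderOf x = 4) : x.a ≠ 0 := by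
  intro h
  have hx2 : x ^ 2 = 1 := by rw [sq_eq, h]; ext <;> simp
  have := orderOf_dvd_of_pow_eq_one hx2
  rw [hx] at this
  exact absurd this (by decide)

lemma card_eq (hn : n ≠ 0) : Nat.card (SuzukiA n θ) = 2 ^ n * 2 ^ n := by
  rw [Nat.card_congr (⟨fun g => (g.a, g.b), fun p => ⟨p.1, p.2⟩, fun _ => rfl, fun _ => rfl⟩ :
    SuzukiA n θ ≃ Fq n × Fq n), Nat.card_prod, GaloisField.card 2 n hn]

variable (θ) in
def traceHom (α : Fq n) : SuzukiA n θ →* Multiplicative (ZMod 2) where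
  toFun g := Multiplicative.ofAdd (Tr (g.a / α))
  map_one' := by simp
  map_mul' g h := by simp [add_div]

lemma mem_ker_traceHom {α : Fq n} {g : SuzukiA n θ} :
    g ∈ (traceHom θ α).ker ↔ Tr (g.a / α) = 0 := by
  simp [traceHom]

lemma index_ker_traceHom (hm : n = 2 * m + 1) {α : Fq n} (hα : α ≠ 0) :
    (traceHom θ α).ker.index = 2 := by
  have hsurj : (traceHom θ α).range = ⊤ := by
    refine MonoidHom.range_eq_top.mpr fun y => ?_
    rcases ZMod.eq_zero_or_eq_one_two y.toAdd with hy | hy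
    · exact ⟨1, by simp [traceHom, ← hy]⟩
    · exact ⟨⟨α, 0⟩, by simp [traceHom, div_self hα, Fq.trace_one hm, ← hy]⟩
  rw [Subgroup.index_ker, hsurj, Subgroup.card_top, Nat.card_eq_fintype_card]
  rfl

lemma exists_conj_commutator_iff (hm : n = 2 * m + 1)
    (hθ : ∀ σ : Fq n ≃+* Fq n, σ ∈ Subgroup.zpowers θ) {x : SuzukiA n θ} (hx : x.a ≠ 0)
    (z : SuzukiA n θ) :
    (∃ g, z = x⁻¹ * g⁻¹ * x * g) ↔ z.a = 0 ∧ Tr (z.b / (x.a * θ x.a)) = 0 := by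
  have hcomm : ∀ g : SuzukiA n θ, x⁻¹ * g⁻¹ * x * g = ⟨0, x.a * θ g.a + g.a * θ x.a⟩ := by
    intro g
    rw [show x⁻¹ * g⁻¹ * x * g = ⁅x⁻¹, g⁻¹⁆ by rw [commutatorElement_def, inv_inv, inv_inv],
      commutatorElement_eq, inv_a, inv_a]
  simp only [hcomm, Fq.trace_eq_zero_iff hm hθ]
  constructor
  · rintro ⟨g, rfl⟩
    exact ⟨rfl, g.a / x.a, by rw [Fq.mul_apply_add_mul_apply_div θ hx, div_self hx, map_one]; ring⟩
  · rintro ⟨ha, s, hs⟩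
    have hc : x.a * θ x.a ≠ 0 := mul_ne_zero hx (by simpa using hx)
    have hb := Fq.mul_apply_add_mul_apply_div θ hx x.a (x.a * s)
    rw [div_self hx, map_one, mul_div_cancel_left₀ s hx, div_eq_iff hc] at hb
    refine ⟨⟨x.a * s, 0⟩, SuzukiA.ext ha ?_⟩
    rw [← (eq_div_iff hc).mp hs]
    exact (hb.trans (by ring)).symm

def centerTraceKer (x : SuzukiA n θ) : Subgroup (SuzukiA n θ) where
  carrier := {z | z.a = 0 ∧ Tr (z.b / (x.a * θ x.a)) = 0}
  mul_mem' := by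
    rintro z z' ⟨hz, hTz⟩ ⟨hz', hTz'⟩
    simp [hz, hz', add_div, hTz, hTz']
  one_mem' := by simp
  inv_mem' := by
    rintro z ⟨hz, hTz⟩
    simp [hz, hTz]

lemma mem_centerTraceKer {x z : SuzukiA n θ} :
    z ∈ centerTraceKer x ↔ z.a = 0 ∧ Tr (z.b / (x.a * θ x.a)) = 0 := Iff.rfl

instance (x : SuzukiA n θ) : (centerTraceKer x).Normal :=
  ⟨fun z hz g => by
    rw [Subgroup.mem_center_iff.mp (mem_center_of_a_eq_zero hz.1), mul_inv_cancel_right]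
    exact hz⟩

-- The extraspecial factor `E`.
def quotTraceKer (x : SuzukiA n θ) : Subgroup (SuzukiA n θ ⧸ centerTraceKer x) :=
  (traceHom θ x.a).ker.map (QuotientGroup.mk' _)

section

variable {x : SuzukiA n θ}

lemma card_centerTraceKer_mul_two (hn : n ≠ 0) (hx : x.a ≠ 0) :
    Nat.card (centerTraceKer x) * 2 = 2 ^ n := by
  have hc : x.a * θ x.a ≠ 0 := mul_ne_zero hx (by simpa using hx)
  have e : centerTraceKer x ≃ Fq.traceKer n :=
    { toFun := fun z => ⟨z.1.b / (x.a * θ x.a), z.2.2⟩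
      invFun := fun t => ⟨⟨0, t * (x.a * θ x.a)⟩, rfl, by
        show Tr (t.1 * (x.a * θ x.a) / (x.a * θ x.a)) = 0
        rw [mul_div_cancel_right₀ _ hc]
        exact t.2⟩
      left_inv := fun z => Subtype.ext (SuzukiA.ext z.2.1.symm (div_mul_cancel₀ _ hc))
      right_inv := fun t => Subtype.ext (mul_div_cancel_right₀ _ hc) }
  rw [Nat.card_congr e, Fq.card_traceKer_mul_two hn]

lemma mk_commute_iff (hx : x.a ≠ 0) (g h : SuzukiA n θ) :
    Commute (g : SuzukiA n θ ⧸ centerTraceKer x) h ↔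
      Tr (g.a / x.a * θ (h.a / x.a) + h.a / x.a * θ (g.a / x.a)) = 0 := by
  rw [← commutatorElement_eq_one_iff_commute, ← QuotientGroup.mk_commutatorElement,
    QuotientGroup.eq_one_iff,
    mem_centerTraceKer, commutatorElement_eq, Fq.mul_apply_add_mul_apply_div θ hx]
  simp

lemma mk_eq_mk_iff {z z' : SuzukiA n θ} (hz : z.a = 0) (hz' : z'.a = 0) :
    (z : SuzukiA n θ ⧸ centerTraceKer x) = z' ↔
      Tr (z.b / (x.a * θ x.a)) = Tr (z'.b / (x.a * θ x.a)) := by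
  rw [QuotientGroup.eq, mem_centerTraceKer]
  simp [hz, hz', add_div, CharTwo.add_eq_zero]

lemma mk_mem_center_of_a_eq_zero {z : SuzukiA n θ} (hz : z.a = 0) :
    (z : SuzukiA n θ ⧸ centerTraceKer x) ∈ Subgroup.center _ :=
  QuotientGroup.mk_mem_center (mem_center_of_a_eq_zero hz)

lemma mk_self_mem_center (hx : x.a ≠ 0) :
    (x : SuzukiA n θ ⧸ centerTraceKer x) ∈ Subgroup.center _ := by
  refine Subgroup.mem_center_iff.mpr fun y => ?_
  obtain ⟨g, rfl⟩ := QuotientGroup.mk_surjective y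
  refine ((mk_commute_iff hx g x).mpr ?_).eq
  rw [div_self hx, map_one, mul_one, one_mul, map_add, Fq.trace_ringEquiv_apply,
    CharTwo.add_self_eq_zero]

lemma trace_sq_b_div (hm : n = 2 * m + 1) (hx : x.a ≠ 0) :
    Tr ((x ^ 2).b / (x.a * θ x.a)) = 1 := by
  rw [sq_eq, div_self (mul_ne_zero hx (by simpa using hx)), Fq.trace_one hm]

lemma orderOf_mk_self (hm : n = 2 * m + 1) (hx : x.a ≠ 0) :
    orderOf (x : SuzukiA n θ ⧸ centerTraceKer x) = 4 := by
  refine orderOf_eq_prime_pow (p := 2) (n := 1) (fun h => ?_) ?_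
  · rw [pow_one, ← QuotientGroup.mk_pow, QuotientGroup.eq_one_iff] at h
    have := h.2
    rw [trace_sq_b_div hm hx] at this
    exact one_ne_zero this
  · rw [← QuotientGroup.mk_pow, show 2 ^ (1 + 1) = 4 by rfl, pow_four_eq_one,
      QuotientGroup.mk_one]

lemma centerTraceKer_le_ker_traceHom : centerTraceKer x ≤ (traceHom θ x.a).ker := by
  intro z hz
  rw [mem_ker_traceHom, hz.1, zero_div, map_zero]

lemma mk_mem_quotTraceKer_iff {g : SuzukiA n θ} :
    (g : SuzukiA n θ ⧸ centerTraceKer x) ∈ quotTraceKer x ↔ Tr (g.a / x.a) = 0 := by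
  change g ∈ (quotTraceKer x).comap (QuotientGroup.mk' _) ↔ _
  rw [quotTraceKer, QuotientGroup.comap_map_mk', sup_of_le_right centerTraceKer_le_ker_traceHom,
    mem_ker_traceHom]

lemma mk_self_sq_mem_quotTraceKer :
    (x : SuzukiA n θ ⧸ centerTraceKer x) ^ 2 ∈ quotTraceKer x := by
  rw [← QuotientGroup.mk_pow, mk_mem_quotTraceKer_iff, sq_eq, zero_div, map_zero]

lemma mk_self_not_mem_quotTraceKer (hm : n = 2 * m + 1) (hx : x.a ≠ 0) :
    (x : SuzukiA n θ ⧸ centerTraceKer x) ∉ quotTraceKer x := by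
  rw [mk_mem_quotTraceKer_iff, div_self hx, Fq.trace_one hm]
  exact one_ne_zero

lemma index_quotTraceKer (hm : n = 2 * m + 1) (hx : x.a ≠ 0) : (quotTraceKer x).index = 2 := by
  rw [quotTraceKer, Subgroup.index_map_eq _ (QuotientGroup.mk'_surjective _)
    (by rw [QuotientGroup.ker_mk']; exact centerTraceKer_le_ker_traceHom), index_ker_traceHom hm hx]

lemma card_quotTraceKer (hm : n = 2 * m + 1) (hx : x.a ≠ 0) :
    Nat.card (quotTraceKer x) = 2 ^ n := by
  have hn : n ≠ 0 := by omega
  have hG := Subgroup.card_eq_card_quotient_mul_card_subgroup (centerTraceKer x)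
  rw [card_eq hn, ← Subgroup.card_mul_index (quotTraceKer x), index_quotTraceKer hm hx, mul_assoc,
    mul_comm 2, card_centerTraceKer_mul_two hn hx] at hG
  exact (Nat.eq_of_mul_eq_mul_right (Nat.two_pow_pos n) hG).symm

lemma center_quotTraceKer (hm : n = 2 * m + 1)
    (hθ : ∀ σ : Fq n ≃+* Fq n, σ ∈ Subgroup.zpowers θ) (hx : x.a ≠ 0) :
    Subgroup.center (quotTraceKer x) =
      (Subgroup.zpowers ((x : SuzukiA n θ ⧸ centerTraceKer x) ^ 2)).subgroupOf (quotTraceKer x) := by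
  ext ⟨q, hq⟩
  rw [Subgroup.mem_subgroupOf]
  constructor
  · intro hcen
    obtain ⟨g, hg, rfl⟩ := Subgroup.mem_map.mp hq
    have hga : g.a = 0 := by
      by_contra hga
      obtain ⟨v, hv, hv1⟩ := Fq.exists_trace_eq_zero_and_trace_eq_one hm hθ
        (div_ne_zero hga hx) (mem_ker_traceHom.mp hg)
      have heQ : ((⟨x.a * v, 0⟩ : SuzukiA n θ) : SuzukiA n θ ⧸ centerTraceKer x) ∈ quotTraceKer x :=
        mk_mem_quotTraceKer_iff.mpr (by rwa [mul_div_cancel_left₀ _ hx])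
      have hcomm := (mk_commute_iff hx _ g).mp
        (congrArg Subtype.val (Subgroup.mem_center_iff.mp hcen ⟨_, heQ⟩))
      rw [mul_div_cancel_left₀ _ hx, add_comm, hv1] at hcomm
      exact one_ne_zero hcomm
    change (g : SuzukiA n θ ⧸ centerTraceKer x) ∈ _
    rcases ZMod.eq_zero_or_eq_one_two (Tr (g.b / (x.a * θ x.a))) with h | h
    · rw [(QuotientGroup.eq_one_iff g).mpr (mem_centerTraceKer.mpr ⟨hga, h⟩)]
      exact Subgroup.one_mem _
    · rw [(mk_eq_mk_iff hga (by rw [sq_eq])).mpr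
        (h.trans (trace_sq_b_div hm hx).symm), QuotientGroup.mk_pow]
      exact Subgroup.mem_zpowers _
  · intro hq'
    refine Subgroup.mem_center_of_coe_mem_center ?_
    exact Subgroup.zpowers_le.mpr (Subgroup.pow_mem _ (mk_self_mem_center hx) 2) hq'

lemma exists_mk_eq (q : quotTraceKer x) :
    ∃ g : SuzukiA n θ, (g : SuzukiA n θ ⧸ centerTraceKer x) = q := by
  obtain ⟨g, -, hg⟩ := Subgroup.mem_map.mp q.2
  exact ⟨g, hg⟩

lemma commutator_quotTraceKer (hn : 1 < n) (hm : n = 2 * m + 1)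
    (hθ : ∀ σ : Fq n ≃+* Fq n, σ ∈ Subgroup.zpowers θ) (hx : x.a ≠ 0) :
    commutator (quotTraceKer x) = Subgroup.center (quotTraceKer x) := by
  apply le_antisymm
  · rw [commutator_def, Subgroup.commutator_le]
    intro q _ r _
    obtain ⟨g, hg⟩ := exists_mk_eq q
    obtain ⟨h, hh⟩ := exists_mk_eq r
    refine Subgroup.mem_center_of_coe_mem_center ?_
    rw [Subgroup.coe_commutatorElement, ← hg, ← hh, ← QuotientGroup.mk_commutatorElement]
    exact mk_mem_center_of_a_eq_zero (by rw [commutatorElement_eq])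
  · obtain ⟨u, hu, hTu⟩ := Fq.exists_ne_zero_trace_eq_zero hn
    obtain ⟨v, hv, huv⟩ := Fq.exists_trace_eq_zero_and_trace_eq_one hm hθ hu hTu
    have hmem : ∀ {t : Fq n}, Tr t = 0 →
        ((⟨x.a * t, 0⟩ : SuzukiA n θ) : SuzukiA n θ ⧸ centerTraceKer x) ∈ quotTraceKer x :=
      fun ht => mk_mem_quotTraceKer_iff.mpr (by rwa [mul_div_cancel_left₀ _ hx])
    have hξ : (x : SuzukiA n θ ⧸ centerTraceKer x) ^ 2 =
        ((⁅(⟨_, hmem hTu⟩ : quotTraceKer x), ⟨_, hmem hv⟩⁆ : quotTraceKer x) :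
          SuzukiA n θ ⧸ centerTraceKer x) := by
      rw [Subgroup.coe_commutatorElement, ← QuotientGroup.mk_commutatorElement,
        ← QuotientGroup.mk_pow, mk_eq_mk_iff (by rw [sq_eq])
          (by rw [commutatorElement_eq]), trace_sq_b_div hm hx, commutatorElement_eq,
        Fq.mul_apply_add_mul_apply_div θ hx, mul_div_cancel_left₀ _ hx,
        mul_div_cancel_left₀ _ hx, huv]
    rw [center_quotTraceKer hm hθ hx]
    rintro q hq
    obtain ⟨k, hk⟩ := Subgroup.mem_zpowers_iff.mp (Subgroup.mem_subgroupOf.mp hq)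
    rw [hξ] at hk
    have : _ = q := Subtype.ext ((Subgroup.coe_zpow _ _ _).trans hk)
    rw [← this]
    exact Subgroup.zpow_mem _ (Subgroup.commutator_mem_commutator
      (Subgroup.mem_top _) (Subgroup.mem_top _)) k

lemma sq_mem_center_quotTraceKer (q : quotTraceKer x) :
    q ^ 2 ∈ Subgroup.center (quotTraceKer x) := by
  obtain ⟨g, hg⟩ := exists_mk_eq q
  refine Subgroup.mem_center_of_coe_mem_center ?_
  rw [Subgroup.coe_pow, ← hg, ← QuotientGroup.mk_pow]
  exact mk_mem_center_of_a_eq_zero (by rw [sq_eq])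

lemma isExtraspecial2_quotTraceKer (hn : 1 < n) (hm : n = 2 * m + 1)
    (hθ : ∀ σ : Fq n ≃+* Fq n, σ ∈ Subgroup.zpowers θ) (hx : x.a ≠ 0) :
    IsExtraspecial2 (quotTraceKer x) := by
  refine ⟨?_, commutator_quotTraceKer hn hm hθ hx, sq_mem_center_quotTraceKer⟩
  have hle := Subgroup.zpowers_le.mpr (mk_self_sq_mem_quotTraceKer (x := x))
  rw [center_quotTraceKer hm hθ hx, Nat.card_congr (Subgroup.subgroupOfEquivOfLe hle).toEquiv,
    Nat.card_zpowers, orderOf_pow_of_dvd two_ne_zero (by rw [orderOf_mk_self hm hx]; norm_num),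
    orderOf_mk_self hm hx]

end

end SuzukiA

open SuzukiA in
theorem stmt14 (n m : ℕ) (hm : n = 2 * m + 1) (hn : 1 < n) (θ : Fq n ≃+* Fq n)
    (hθ : ∀ σ : Fq n ≃+* Fq n, σ ∈ Subgroup.zpowers θ)
    (x : SuzukiA n θ) (hx : orderOf x = 4) :
    ∀ (N : Subgroup (SuzukiA n θ)) [N.Normal],
      (N : Set (SuzukiA n θ)) = {z : SuzukiA n θ | ∃ g, z = x⁻¹ * g⁻¹ * x * g} →
      ∃ P Q : Subgroup (SuzukiA n θ ⧸ N),
        P = Subgroup.zpowers (QuotientGroup.mk x : SuzukiA n θ ⧸ N) ∧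
        Nat.card P = 4 ∧
        IsExtraspecial2 Q ∧
        Nat.card Q = 2 ^ n ∧
        P ⊔ Q = ⊤ ∧
        (∀ p ∈ P, ∀ q ∈ Q, Commute p q) ∧
        P ⊓ Q = Subgroup.zpowers ((QuotientGroup.mk x : SuzukiA n θ ⧸ N) ^ 2) ∧
        (P ⊓ Q).subgroupOf Q = Subgroup.center Q := by
  intro N _ hN
  have hxa := a_ne_zero_of_orderOf_eq_four hx
  obtain rfl : N = centerTraceKer x := SetLike.coe_injective <| hN.trans <|
    Set.ext fun z => exists_conj_commutator_iff hm hθ hxa z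
  have hinf := Subgroup.zpowers_inf_eq_zpowers_sq (mk_self_not_mem_quotTraceKer hm hxa)
    mk_self_sq_mem_quotTraceKer
  refine ⟨_, quotTraceKer x, rfl, by rw [Nat.card_zpowers, orderOf_mk_self hm hxa],
    isExtraspecial2_quotTraceKer hn hm hθ hxa, card_quotTraceKer hm hxa,
    Subgroup.zpowers_sup_eq_top_of_index_eq_two (index_quotTraceKer hm hxa)
      (mk_self_not_mem_quotTraceKer hm hxa),
    fun p hp q _ => ?_, hinf, by rw [hinf, center_quotTraceKer hm hθ hxa]⟩
  exact (Subgroup.mem_center_iff.mp (Subgroup.zpowers_le.mpr (mk_self_mem_center hxa) hp) q).symm
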